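/- arXiv:2304.09019 — 3 statements merged into one kernel-verified Lean document; each statement's English description precedes it below -/
import Mathlib

section
/- Let Δ, Ω : ℝ → ℝ be functions, let p̂ ∈ ℝ, and suppose Δ(p̂) > 0, Ω(p̂) > 0, and Δ and Ω have derivatives Δ' and Ω' at p̂ (HasDerivAt). Set y = √(Δ(p̂)) / Ω(p̂). Then there exists a real number d such that both functions f(p) = log(1 + Δ(p)/Ω(p)) and g(p) = log(1 + 2·y·√(Δ(p)) − y²·Ω(p)) have derivative d at p̂; in particular their first derivatives at p̂ coincide. (This is condition C2: the surrogate is tangent to the objective at the current point.) -/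
/-! The surrogate's argument `1 + 2y√Δ − y²Ω` agrees with the objective's argument `1 + Δ/Ω`
at `p̂` both in value (since `y√Δ(p̂) = y²Ω(p̂) = Δ(p̂)/Ω(p̂)`) and in derivative (both are
`(Δ'Ω − ΔΩ')/Ω²`), so the chain rule for `log` gives the same derivative for both. -/

open Real

lemma one_add_two_mul_sqrt_div_mul_sqrt_sub {a : ℝ} (ha : 0 ≤ a) (b : ℝ) :
    1 + 2 * (√a / b) * √a - (√a / b) ^ 2 * b = 1 + a / b := by
  rcases eq_or_ne b 0 with rfl | hb
  · simp
  · field_simp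
    rw [sq_sqrt ha]
    ring

lemma hasDerivAt_surrogate_arg {Δ Ω : ℝ → ℝ} {x Δ' Ω' : ℝ}
    (hΔ : HasDerivAt Δ Δ' x) (hΩ : HasDerivAt Ω Ω' x) (hΔx : 0 < Δ x) :
    HasDerivAt (fun p => 1 + 2 * (√(Δ x) / Ω x) * √(Δ p) - (√(Δ x) / Ω x) ^ 2 * Ω p)
      ((Δ' * Ω x - Δ x * Ω') / Ω x ^ 2) x := by
  refine ((((hΔ.sqrt hΔx.ne').const_mul (2 * (√(Δ x) / Ω x))).const_add 1).sub
    (hΩ.const_mul ((√(Δ x) / Ω x) ^ 2))).congr_deriv ?_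
  rcases eq_or_ne (Ω x) 0 with hΩx | hΩx
  · simp [hΩx]
  · field_simp
    rw [sq_sqrt hΔx.le]
    ring

/-- Condition C2: the MM surrogate `g(p) = log(1 + 2y√(Δ p) − y²·Ω p)` with
`y = √(Δ p̂)/Ω p̂` is tangent to the objective `f(p) = log(1 + Δ p / Ω p)`
at the current point `p̂`: the two functions have the same derivative there. -/
theorem surrogate_tangent_at_point (Δ Ω : ℝ → ℝ) (phat Δ' Ω' : ℝ)
    (hΔ : HasDerivAt Δ Δ' phat) (hΩ : HasDerivAt Ω Ω' phat)
    (hΔp : 0 < Δ phat) (hΩp : 0 < Ω phat) :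
    ∃ d : ℝ,
      HasDerivAt (fun p => Real.log (1 + Δ p / Ω p)) d phat ∧
      HasDerivAt (fun p =>
        Real.log (1 + 2 * (Real.sqrt (Δ phat) / Ω phat) * Real.sqrt (Δ p)
          - (Real.sqrt (Δ phat) / Ω phat) ^ 2 * Ω p)) d phat := by
  have hval := one_add_two_mul_sqrt_div_mul_sqrt_sub hΔp.le (Ω phat)
  have harg_ne : 1 + Δ phat / Ω phat ≠ 0 := by positivity
  refine ⟨_, ((hΔ.div hΩ hΩp.ne').const_add 1).log harg_ne, ?_⟩
  simpa [hval] using (hasDerivAt_surrogate_arg hΔ hΩ hΔp).log (hval ▸ harg_ne)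
end

section
/- Let Δ ≥ 0 and Ω > 0 be real numbers and set y = √(Δ / (Ω·(Δ + Ω))). Then the function φ(γ) = log(1 + γ) − γ + 2·y·√(Δ·(1 + γ)) attains its maximum over the interval (−1, ∞) at γ = Δ/Ω; that is, for every γ > −1, φ(γ) ≤ φ(Δ/Ω). -/
/-- The inner maximization of problem P5: with `y = √(Δ/(Ω(Δ+Ω)))`, the
function `φ(γ) = log(1+γ) − γ + 2y√(Δ(1+γ))` attains its maximum over
`(−1, ∞)` at `γ = Δ/Ω`. -/
theorem gamma_update_optimal (Δ Ω : ℝ) (hΔ : 0 ≤ Δ) (hΩ : 0 < Ω) :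
    IsMaxOn
      (fun γ => Real.log (1 + γ) - γ
        + 2 * Real.sqrt (Δ / (Ω * (Δ + Ω))) * Real.sqrt (Δ * (1 + γ)))
      (Set.Ioi (-1 : ℝ)) (Δ / Ω) := by
  intro γ hγ
  simp only [Set.mem_Ioi, Set.mem_setOf_eq] at *
  have h1γ : (0:ℝ) < 1 + γ := by linarith
  have hΔΩ : (0:ℝ) < Δ + Ω := by linarith
  rcases eq_or_lt_of_le hΔ with h0 | h0
  · -- Δ = 0
    subst h0
    simp only [zero_div, Real.sqrt_zero, zero_mul, mul_zero, add_zero, Real.log_one]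
    have := Real.log_le_sub_one_of_pos h1γ
    linarith
  · set γs := Δ / Ω with hγs
    have h1γs : 1 + γs = (Δ + Ω)/Ω := by rw [hγs]; field_simp; ring
    have h1γspos : (0:ℝ) < 1 + γs := by rw [h1γs]; positivity
    have hAC : Real.sqrt (Δ / (Ω * (Δ + Ω))) * Real.sqrt (Δ * (1 + γs)) = Δ / Ω := by
      rw [← Real.sqrt_mul (by positivity)]
      rw [show Δ / (Ω * (Δ + Ω)) * (Δ * (1 + γs)) = (Δ/Ω)^2 by
        rw [h1γs]; field_simp]
      exact Real.sqrt_sq (by positivity)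
    have hlog : Real.log (1+γ) - Real.log (1+γs) ≤ (1+γ)/(1+γs) - 1 := by
      have h := Real.log_le_sub_one_of_pos (show (0:ℝ) < (1+γ)/(1+γs) by positivity)
      rwa [Real.log_div (by linarith) (by linarith)] at h
    set q := Real.sqrt (Δ / (Ω * (Δ + Ω))) * Real.sqrt (Δ * (1 + γ)) with hqdef
    have hq0 : 0 ≤ q := by positivity
    have hq2 : q^2 * (Ω*(Δ+Ω)) = Δ^2 * (1+γ) := by
      rw [hqdef, mul_pow, Real.sq_sqrt (by positivity), Real.sq_sqrt (by positivity)]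
      field_simp
    have hN : 0 ≤ Δ*(Δ+Ω) + (1+γ)*Ω*Δ - 2*q*Ω*(Δ+Ω) := by
      have hmul : 0 ≤ (Δ+Ω) * (Δ - q*Ω)^2 := by positivity
      have hΔN : 0 ≤ Δ * (Δ*(Δ+Ω) + (1+γ)*Ω*Δ - 2*q*Ω*(Δ+Ω)) := by nlinarith
      nlinarith [mul_pos hΩ hΔΩ]
    have hdiv : (1+γ)/(1+γs) - 1 - γ + 2*q ≤ -γs + 2*(Δ/Ω) := by
      rw [← sub_nonneg]
      have hexp : -γs + 2*(Δ/Ω) - ((1+γ)/(1+γs) - 1 - γ + 2*q)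
          = (Δ*(Δ+Ω) + (1+γ)*Ω*Δ - 2*q*Ω*(Δ+Ω)) / (Ω*(Δ+Ω)) := by
        rw [h1γs, hγs]; field_simp; ring
      rw [hexp]
      exact div_nonneg hN (by positivity)
    have e2 : 2 * Real.sqrt (Δ / (Ω * (Δ + Ω))) * Real.sqrt (Δ * (1 + γ)) = 2*q := by
      rw [hqdef]; ring
    have e3 : 2 * Real.sqrt (Δ / (Ω * (Δ + Ω))) * Real.sqrt (Δ * (1 + γs)) = 2*(Δ/Ω) := by
      rw [mul_assoc, hAC]
    linarith
end

section
/- Let y > 0, C > 0, E > 0, and P_max > 0 be real numbers, and define h(p) = 2·y·√(C·p) − E·p. Then h is concave on [0, ∞), and the point p* = min(P_max, y²·C/E²) maximizes h over the interval [0, P_max]; that is, for every p ∈ [0, P_max], h(p) ≤ h(p*). -/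
lemma sqrt_concave_aux : ConcaveOn ℝ (Set.Ici (0:ℝ)) Real.sqrt :=
  Real.strictConcaveOn_sqrt.concaveOn

/-- Closed-form transmit-power update: for positive `y, C, E, Pmax`,
`h(p) = 2y√(Cp) − Ep` is concave on `[0,∞)` and is maximized over
`[0, Pmax]` at `p* = min(Pmax, y²C/E²)`. -/
theorem power_update_closed_form (y C E Pmax : ℝ)
    (hy : 0 < y) (hC : 0 < C) (hE : 0 < E) (hP : 0 < Pmax) :
    ConcaveOn ℝ (Set.Ici (0 : ℝ)) (fun p => 2 * y * Real.sqrt (C * p) - E * p) ∧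
    IsMaxOn (fun p => 2 * y * Real.sqrt (C * p) - E * p)
      (Set.Icc (0 : ℝ) Pmax) (min Pmax (y ^ 2 * C / E ^ 2)) := by
  constructor
  · have h1 : ConcaveOn ℝ (Set.Ici (0:ℝ))
        (fun p => (2 * y * Real.sqrt C) • Real.sqrt p - E • p) := by
      apply ConcaveOn.sub
      · exact sqrt_concave_aux.smul (by positivity)
      · exact (convexOn_id (convex_Ici 0)).smul hE.le
    apply h1.congr
    intro p hp
    simp only [Set.mem_Ici] at hp
    simp [smul_eq_mul, Real.sqrt_mul hC.le]
    ring
  · intro p hp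
    simp only [Set.mem_Icc] at hp
    obtain ⟨hp0, hpP⟩ := hp
    set pstar := min Pmax (y ^ 2 * C / E ^ 2) with hps
    have hps0 : 0 ≤ pstar := le_min hP.le (by positivity)
    set s := Real.sqrt p with hs
    set t := Real.sqrt pstar with ht
    have hs0 : 0 ≤ s := Real.sqrt_nonneg _
    have ht0 : 0 ≤ t := Real.sqrt_nonneg _
    have hss : s ^ 2 = p := Real.sq_sqrt hp0
    have htt : t ^ 2 = pstar := Real.sq_sqrt hps0
    have htstar : t ≤ y * Real.sqrt C / E := by
      rw [← Real.sqrt_sq (by positivity : (0:ℝ) ≤ y * Real.sqrt C / E)]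
      apply Real.sqrt_le_sqrt
      have : (y * Real.sqrt C / E) ^ 2 = y ^ 2 * C / E ^ 2 := by
        rw [div_pow, mul_pow, Real.sq_sqrt hC.le]
      rw [this]
      exact min_le_right _ _
    -- goal: 2y√(Cp) - Ep ≤ 2y√(C pstar) - E pstar
    simp only [Set.mem_setOf_eq]
    have hCp : Real.sqrt (C * p) = Real.sqrt C * s := by
      rw [Real.sqrt_mul hC.le]
    have hCps : Real.sqrt (C * pstar) = Real.sqrt C * t := by
      rw [Real.sqrt_mul hC.le]
    rw [hCp, hCps, ← hss, ← htt]
    -- need: 2y√C s - E s² ≤ 2y√C t - E t²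
    rcases le_or_gt s t with hle | hgt
    · -- s ≤ t ≤ y√C/E
      have hsum : E * (s + t) ≤ 2 * y * Real.sqrt C := by
        have h1 : s + t ≤ 2 * (y * Real.sqrt C / E) := by
          have := le_trans hle htstar; linarith
        calc E * (s + t) ≤ E * (2 * (y * Real.sqrt C / E)) :=
              mul_le_mul_of_nonneg_left h1 hE.le
          _ = 2 * y * Real.sqrt C := by field_simp
      nlinarith [mul_nonneg (sub_nonneg.2 hle) (sub_nonneg.2 hsum)]
    · -- s > t : then p > pstar, so pstar = y²C/E², t = y√C/E
      have hpp : pstar < p := by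
        rw [← hss, ← htt]
        exact pow_lt_pow_left₀ hgt ht0 (by norm_num)
      have : pstar = y ^ 2 * C / E ^ 2 := by
        rcases min_cases Pmax (y ^ 2 * C / E ^ 2) with ⟨h1, _⟩ | ⟨h1, _⟩
        · exfalso; rw [hps, h1] at hpp; linarith
        · rw [hps, h1]
      have ht' : t = y * Real.sqrt C / E := by
        rw [ht, this]
        rw [show y ^ 2 * C / E ^ 2 = (y * Real.sqrt C / E) ^ 2 by
          rw [div_pow, mul_pow, Real.sq_sqrt hC.le]]
        exact Real.sqrt_sq (by positivity)
      have key : 2 * y * Real.sqrt C = 2 * E * t := by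
        rw [ht']; field_simp
      nlinarith [sq_nonneg (s - t), hE.le]
end
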